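/- arXiv:1402.0822 — 6 statements merged into one kernel-verified Lean document; each statement's English description precedes it below -/
import Mathlib

section
/- Let φ : (0,∞) × (0,∞) → [0,∞) be a measurable function such that for every t > 0 the map s ↦ φ(t,s) is monotone increasing on (0,t]. Assume that for every t > 0, lim_{α → ∞} α ∫₀^t e^{−α s} φ(t,s) ds = 0. Then for (Lebesgue) almost every t > 0 one has lim_{δ → 0⁺} φ(t,δ) = 0. -/
open MeasureTheory Filter Set Topology Real

/-!
Since `φ(t,·)` is increasing, `φ(t,δ)` decreases to its infimum `L ≥ 0` as `δ → 0⁺`, so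
`φ(t,s) ≥ L` on `(0,t]`; monotonicity also makes `φ(t,·)` measurable and bounded there. Hence
`α ∫₀^t e^{-αs} φ(t,s) ds ≥ L (1 - e^{-αt}) → L`, and the hypothesis forces `L = 0`.
-/

lemma integral_exp_neg_mul_Ioc {α : ℝ} (hα : α ≠ 0) {t : ℝ} (ht : 0 ≤ t) :
    ∫ s in Ioc 0 t, exp (-α * s) = (1 - exp (-α * t)) / α := by
  rw [← intervalIntegral.integral_of_le ht, intervalIntegral.integral_comp_mul_left
    (fun s => exp s) (neg_ne_zero.mpr hα), integral_exp, mul_zero, exp_zero, smul_eq_mul]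
  field_simp
  ring

lemma MonotoneOn.integrableOn_Ioc_of_nonneg {μ : Measure ℝ} [IsLocallyFiniteMeasure μ]
    {f : ℝ → ℝ} {a b : ℝ} (hf : MonotoneOn f (Ioc a b)) (h0 : ∀ s ∈ Ioc a b, 0 ≤ f s) :
    IntegrableOn f (Ioc a b) μ := by
  refine ⟨(aemeasurable_restrict_of_monotoneOn measurableSet_Ioc hf).aestronglyMeasurable,
    .restrict_of_bounded (C := f b) measure_Ioc_lt_top ?_⟩
  filter_upwards [ae_restrict_mem measurableSet_Ioc] with s hs
  have hb : b ∈ Ioc a b := ⟨hs.1.trans_le hs.2, le_rfl⟩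
  rw [norm_of_nonneg (h0 s hs)]
  exact hf hs hb hs.2

/-- The easy (Abelian) half of the initial value theorem for the Laplace transform on `(0,t]`. -/
lemma le_of_tendsto_mul_setIntegral_exp_neg_mul {f : ℝ → ℝ} {t ε L : ℝ} (ht : 0 < t)
    (hf : IntegrableOn f (Ioc 0 t)) (hε : ∀ s ∈ Ioc 0 t, ε ≤ f s)
    (hlim : Tendsto (fun α => α * ∫ s in Ioc 0 t, exp (-α * s) * f s) atTop (𝓝 L)) :
    ε ≤ L := by
  have hlower : ∀ᶠ α in atTop,
      ε * (1 - exp (-α * t)) ≤ α * ∫ s in Ioc 0 t, exp (-α * s) * f s := by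
    filter_upwards [eventually_gt_atTop 0] with α hα
    have hexp_le_one : ∀ s ∈ Ioc (0 : ℝ) t, ‖exp (-α * s)‖ ≤ 1 := fun s hs => by
      rw [norm_of_nonneg (exp_nonneg _), exp_le_one_iff]
      nlinarith [hs.1]
    have hint : IntegrableOn (fun s => exp (-α * s) * f s) (Ioc 0 t) :=
      hf.bdd_mul (by fun_prop) ((ae_restrict_mem measurableSet_Ioc).mono hexp_le_one)
    calc ε * (1 - exp (-α * t))
        = α * ∫ s in Ioc 0 t, exp (-α * s) * ε := by
          rw [integral_mul_const, integral_exp_neg_mul_Ioc hα.ne' ht.le]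
          field_simp
      _ ≤ α * ∫ s in Ioc 0 t, exp (-α * s) * f s := by
          refine mul_le_mul_of_nonneg_left ?_ hα.le
          refine setIntegral_mono_on (Continuous.integrableOn_Ioc (by fun_prop)) hint
            measurableSet_Ioc fun s hs => ?_
          exact mul_le_mul_of_nonneg_left (hε s hs) (exp_nonneg _)
  have hbound : Tendsto (fun α => ε * (1 - exp (-α * t))) atTop (𝓝 ε) := by
    have hexp : Tendsto (fun α => exp (-α * t)) atTop (𝓝 0) :=
      tendsto_exp_atBot.comp (tendsto_neg_atTop_atBot.atBot_mul_const ht)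
    simpa using ((tendsto_const_nhds (x := (1 : ℝ))).sub hexp).const_mul ε
  exact le_of_tendsto_of_tendsto hbound hlim hlower

lemma MonotoneOn.tendsto_nhdsGT_zero_of_tendsto_mul_setIntegral_exp_neg_mul {f : ℝ → ℝ} {t : ℝ}
    (ht : 0 < t) (hf : MonotoneOn f (Ioc 0 t)) (h0 : ∀ s ∈ Ioc 0 t, 0 ≤ f s)
    (hlim : Tendsto (fun α => α * ∫ s in Ioc 0 t, exp (-α * s) * f s) atTop (𝓝 0)) :
    Tendsto f (𝓝[>] 0) (𝓝 0) := by
  have hIoc : Ioc 0 t ∈ 𝓝[>] (0 : ℝ) := Ioc_mem_nhdsGT ht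
  refine tendsto_order.2 ⟨fun l hl => ?_, fun m hm => ?_⟩
  · filter_upwards [hIoc] with s hs
    exact hl.trans_le (h0 s hs)
  · obtain ⟨s, hs, hfs⟩ : ∃ s ∈ Ioc 0 t, f s < m := by
      by_contra! hge
      exact hm.not_ge
        (le_of_tendsto_mul_setIntegral_exp_neg_mul ht (hf.integrableOn_Ioc_of_nonneg h0) hge hlim)
    filter_upwards [Ioc_mem_nhdsGT hs.1] with w hw
    exact (hf ⟨hw.1, hw.2.trans hs.2⟩ hs hw.2).trans_lt hfs

theorem stmt0_general (φ : ℝ → ℝ → ℝ)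
    (hnonneg : ∀ t s : ℝ, 0 < t → 0 < s → 0 ≤ φ t s)
    (hmono : ∀ t : ℝ, 0 < t → ∀ s u : ℝ, 0 < s → s ≤ u → u ≤ t → φ t s ≤ φ t u)
    (hlim : ∀ t : ℝ, 0 < t →
      Tendsto (fun α : ℝ => α * ∫ s in Set.Ioc (0:ℝ) t, Real.exp (-α * s) * φ t s)
        atTop (nhds 0)) :
    ∀ᵐ t ∂(volume.restrict (Set.Ioi (0:ℝ))),
      Tendsto (fun s => φ t s) (nhdsWithin 0 (Set.Ioi 0)) (nhds 0) := by
  filter_upwards [ae_restrict_mem measurableSet_Ioi] with t (ht : 0 < t)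
  exact MonotoneOn.tendsto_nhdsGT_zero_of_tendsto_mul_setIntegral_exp_neg_mul ht
    (fun s hs u hu hsu => hmono t ht s u hs.1 hsu hu.2) (fun s hs => hnonneg t s ht hs.1)
    (hlim t ht)

/-- (a)(i) of the Laplace-transform lemma. If `φ(t,·)` is nonnegative and
increasing on `(0,t]` for every `t > 0`, and for every `t > 0` we have
`α ∫₀^t e^{-αs} φ(t,s) ds → 0` as `α → ∞`, then `φ(t,0⁺) = 0` for a.e. `t > 0`. -/
theorem stmt0 (φ : ℝ → ℝ → ℝ)
    (hmeas : Measurable (Function.uncurry φ))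
    (hnonneg : ∀ t s : ℝ, 0 < t → 0 < s → 0 ≤ φ t s)
    (hmono : ∀ t : ℝ, 0 < t → ∀ s u : ℝ, 0 < s → s ≤ u → u ≤ t → φ t s ≤ φ t u)
    (hlim : ∀ t : ℝ, 0 < t →
      Tendsto (fun α : ℝ => α * ∫ s in Set.Ioc (0:ℝ) t, Real.exp (-α * s) * φ t s)
        atTop (nhds 0)) :
    ∀ᵐ t ∂(volume.restrict (Set.Ioi (0:ℝ))),
      Tendsto (fun s => φ t s) (nhdsWithin 0 (Set.Ioi 0)) (nhds 0) :=
  stmt0_general φ hnonneg hmono hlim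
end

section
/- Let a : ℝ → ℝ be continuous with a(x) > 0 for all x, and let b : ℝ → ℝ be continuous and satisfy |b(x)| ≤ K(1+|x|) for all x ∈ ℝ, for some constant K > 0. Define I(x) = ∫₀^x (2/a(y)) exp(2 ∫₀^y b(z)/a(z) dz) dy for x ≥ 0, s′(x) = exp(−2 ∫₀^x b(z)/a(z) dz), and K₀ = K + 1/I(1). Then for every x > 1, I(x) · s′(x) ≥ 1/(K₀ + K x). -/
open MeasureTheory Filter

/-- the key estimate for Feller's inaccessibility criterion under linear
growth of the drift. With `I(x) = ∫₀^x (2/a(y)) exp(2∫₀^y b/a) dy`,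
`s'(x) = exp(-2∫₀^x b/a)` and `K₀ = K + 1/I(1)`, one has
`I(x) s'(x) ≥ 1/(K₀ + K x)` for all `x > 1`. -/
theorem stmt3 (a b : ℝ → ℝ) (K : ℝ) (hK : 0 < K)
    (ha_cont : Continuous a) (ha_pos : ∀ x : ℝ, 0 < a x)
    (hb_cont : Continuous b) (hb : ∀ x : ℝ, |b x| ≤ K * (1 + |x|)) :
    ∀ x : ℝ, 1 < x →
      (∫ y in (0:ℝ)..x, (2 / a y) * Real.exp (2 * ∫ z in (0:ℝ)..y, b z / a z)) *
          Real.exp (-2 * ∫ z in (0:ℝ)..x, b z / a z)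
        ≥ 1 / ((K + 1 / ∫ y in (0:ℝ)..1,
            (2 / a y) * Real.exp (2 * ∫ z in (0:ℝ)..y, b z / a z)) + K * x) := by
  intro x hx
  have hane : ∀ z : ℝ, a z ≠ 0 := fun z => (ha_pos z).ne'
  set f : ℝ → ℝ := fun z => b z / a z with hfdef
  have hfc : Continuous f := hb_cont.div ha_cont hane
  set F : ℝ → ℝ := fun y => 2 * ∫ z in (0:ℝ)..y, f z with hFdef
  set g : ℝ → ℝ := fun y => (2 / a y) * Real.exp (F y) with hgdef
  -- derivative of exp ∘ F
  have hF : ∀ y : ℝ, HasDerivAt F (2 * f y) y := by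
    intro y
    exact ((hfc.integral_hasStrictDerivAt 0 y).hasDerivAt.const_mul 2)
  have hE : ∀ y : ℝ, HasDerivAt (fun t => Real.exp (F t)) (b y * g y) y := by
    intro y
    have h := (hF y).exp
    convert h using 1
    simp only [hgdef, hfdef]
    field_simp
  have hgcont : Continuous g := by
    have hFc : Continuous F := by
      have : Continuous fun y : ℝ => ∫ z in (0:ℝ)..y, f z := by
        apply intervalIntegral.continuous_primitive
        exact fun a b => hfc.intervalIntegrable a b
      exact continuous_const.mul this
    exact ((continuous_const.div ha_cont hane)).mul hFc.rexp
  have hgpos : ∀ y : ℝ, 0 < g y := fun y =>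
    mul_pos (div_pos two_pos (ha_pos y)) (Real.exp_pos _)
  set I : ℝ → ℝ := fun x => ∫ y in (0:ℝ)..x, g y with hIdef
  have hx0 : (0:ℝ) ≤ x := le_of_lt (lt_trans one_pos hx)
  -- FTC: exp (F x) = 1 + ∫ y in 0..x, b y * g y
  have hFTC : Real.exp (F x) = 1 + ∫ y in (0:ℝ)..x, b y * g y := by
    have := intervalIntegral.integral_eq_sub_of_hasDerivAt
      (fun y _ => hE y) ((hb_cont.mul hgcont).intervalIntegrable 0 x)
    have hF0 : F 0 = 0 := by simp [hFdef]
    rw [this, hF0, Real.exp_zero]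
    ring
  -- bound the integral
  have hbound : (∫ y in (0:ℝ)..x, b y * g y) ≤ K * (1 + x) * I x := by
    have h1 : (∫ y in (0:ℝ)..x, b y * g y) ≤ ∫ y in (0:ℝ)..x, K * (1 + x) * g y := by
      apply intervalIntegral.integral_mono_on hx0
        ((hb_cont.mul hgcont).intervalIntegrable 0 x)
        ((continuous_const.mul hgcont).intervalIntegrable 0 x)
      intro y hy
      have hy0 : 0 ≤ y := hy.1
      have hyx : y ≤ x := hy.2
      have h2 : b y ≤ K * (1 + x) := by
        calc b y ≤ |b y| := le_abs_self _
        _ ≤ K * (1 + |y|) := hb y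
        _ ≤ K * (1 + x) := by
            apply mul_le_mul_of_nonneg_left _ hK.le
            rw [abs_of_nonneg hy0]; linarith
      exact mul_le_mul_of_nonneg_right h2 (hgpos y).le
    rw [intervalIntegral.integral_const_mul] at h1
    exact h1
  -- I 1 ≤ I x and 0 < I 1
  have hI1pos : 0 < I 1 := by
    apply intervalIntegral.intervalIntegral_pos_of_pos_on
      (hgcont.intervalIntegrable 0 1) (fun y _ => hgpos y) one_pos
  have hI1x : I 1 ≤ I x := by
    have hadd : I 1 + (∫ y in (1:ℝ)..x, g y) = I x :=
      intervalIntegral.integral_add_adjacent_intervals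
        (hgcont.intervalIntegrable 0 1) (hgcont.intervalIntegrable 1 x)
    have hnn : 0 ≤ ∫ y in (1:ℝ)..x, g y :=
      intervalIntegral.integral_nonneg hx.le (fun y _ => (hgpos y).le)
    linarith
  have hIxpos : 0 < I x := lt_of_lt_of_le hI1pos hI1x
  set D : ℝ := (K + 1 / I 1) + K * x with hDdef
  have hDpos : 0 < D := by
    have : 0 < 1 / I 1 := by positivity
    have : 0 < K * x := by positivity
    positivity
  have hkey : Real.exp (F x) ≤ I x * D := by
    have h1 : (1:ℝ) ≤ I x / I 1 := (one_le_div hI1pos).mpr hI1x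
    have h2 : K * (1 + x) * I x ≤ (K + K * x) * I x := by
      apply mul_le_mul_of_nonneg_right _ hIxpos.le
      ring_nf; exact le_refl _
    calc Real.exp (F x) = 1 + ∫ y in (0:ℝ)..x, b y * g y := hFTC
      _ ≤ I x / I 1 + K * (1 + x) * I x := by linarith
      _ ≤ I x / I 1 + (K + K * x) * I x := by linarith
      _ = I x * D := by rw [hDdef]; field_simp; ring
  -- conclude
  have hgoal : 1 / D ≤ I x * Real.exp (-F x) := by
    rw [Real.exp_neg]
    rw [← div_eq_mul_inv]
    rw [div_le_div_iff₀ hDpos (Real.exp_pos _)]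
    calc 1 * Real.exp (F x) = Real.exp (F x) := one_mul _
      _ ≤ I x * D := hkey
  -- match with the stated goal
  have hFx : -F x = -2 * ∫ z in (0:ℝ)..x, b z / a z := by
    simp [hFdef, hfdef]; try ring
  rw [ge_iff_le]
  calc 1 / ((K + 1 / ∫ y in (0:ℝ)..1,
            (2 / a y) * Real.exp (2 * ∫ z in (0:ℝ)..y, b z / a z)) + K * x)
      = 1 / D := by rfl
    _ ≤ I x * Real.exp (-F x) := hgoal
    _ = _ := by rw [hFx]
end

section
/- Let a : ℝ → ℝ be continuous with a(x) > 0 for all x, and let b : ℝ → ℝ be continuous and satisfy |b(x)| ≤ K(1+|x|) for all x ∈ ℝ, for some constant K > 0. Define I(x) = ∫₀^x (2/a(y)) exp(2 ∫₀^y b(z)/a(z) dz) dy and s′(x) = exp(−2 ∫₀^x b(z)/a(z) dz). Then ∫₁^∞ I(x) s′(x) dx = ∞, i.e. the integral ∫₁^∞ I(x) s′(x) dx diverges. -/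
open MeasureTheory Set

/-! With `f = I s′` one computes `f′ = (2/a)(1 - b f)`, so `f` increases wherever `b f < 1`.
Linear growth gives `b x ≤ C x` for `x ≥ 1`, so along the fence `ε/x` with `ε ≤ 1/(2C)`
we have `b f ≤ 1/2`: `f` cannot cross the decreasing fence from above and stays `≥ ε/x`
on `[1, ∞)`. Since `∫₁^∞ dx/x = ∞`, the integral diverges. -/

theorem lintegral_Ioi_ofReal_const_mul_inv_eq_top {c a : ℝ} (hc : 0 < c) (ha : 0 ≤ a) :
    ∫⁻ x in Ioi a, ENNReal.ofReal (c * x⁻¹) = ⊤ := by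
  by_contra hfin
  have hnonneg : 0 ≤ᵐ[volume.restrict (Ioi a)] fun x => c * x⁻¹ := by
    filter_upwards [ae_restrict_mem measurableSet_Ioi] with x hx
    have : 0 < x := ha.trans_lt hx
    positivity
  have hmeas : AEStronglyMeasurable (fun x : ℝ => c * x⁻¹) (volume.restrict (Ioi a)) :=
    (measurable_inv.const_mul c).aestronglyMeasurable
  have hint := (lintegral_ofReal_ne_top_iff_integrable hmeas hnonneg).1 hfin
  exact not_integrableOn_Ioi_inv ((integrable_const_mul_iff (isUnit_iff_ne_zero.2 hc.ne') _).1 hint)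

theorem const_mul_inv_le_of_hasDerivAt_eq_mul_one_sub {f g b : ℝ → ℝ} {K : ℝ} (hK : 0 < K)
    (hf : ∀ x, 1 ≤ x → HasDerivAt f (g x * (1 - b x * f x)) x)
    (hg : ∀ x, 1 ≤ x → 0 < g x) (hb : ∀ x, 1 ≤ x → b x ≤ K * x) (hf₁ : 0 < f 1)
    {x : ℝ} (hx : 1 ≤ x) :
    min (f 1) (2 * K)⁻¹ * x⁻¹ ≤ f x := by
  set ε := min (f 1) (2 * K)⁻¹
  have hε : 0 < ε := lt_min hf₁ (by positivity)
  -- Mathlib's fencing theorem gives upper bounds, so it is applied to `-f` and `-ε/t`.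
  have hfence := image_le_of_deriv_right_lt_deriv_boundary' (a := (1 : ℝ)) (b := x)
    (f := fun t => -f t) (f' := fun t => -(g t * (1 - b t * f t)))
    (B := fun t => -(ε * t⁻¹)) (B' := fun t => -(ε * -(t ^ 2)⁻¹))
    (fun t ht => (hf t ht.1).continuousAt.continuousWithinAt.neg)
    (fun t ht => (hf t ht.1).neg.hasDerivWithinAt)
    (show -f 1 ≤ -(ε * 1⁻¹) by rw [inv_one, mul_one, neg_le_neg_iff]; exact min_le_left _ _)
    (fun t ht =>
      ((continuousAt_inv₀ (one_pos.trans_le ht.1).ne').const_mul ε).neg.continuousWithinAt)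
    (fun t ht => ((hasDerivAt_inv (one_pos.trans_le ht.1).ne').const_mul ε).neg.hasDerivWithinAt)
    (by
      rintro t ⟨ht₁, -⟩ hft
      have ht₀ : 0 < t := one_pos.trans_le ht₁
      have hft : f t = ε * t⁻¹ := neg_inj.1 hft
      have hbf : b t * f t ≤ K * ε := by
        calc b t * f t ≤ K * t * (ε * t⁻¹) := by
              rw [hft]; exact mul_le_mul_of_nonneg_right (hb t ht₁) (by positivity)
          _ = K * ε := by field_simp
      have hKε : K * ε ≤ 1 / 2 := by
        calc K * ε ≤ K * (2 * K)⁻¹ := mul_le_mul_of_nonneg_left (min_le_right _ _) hK.le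
          _ = 1 / 2 := by field_simp
      have := mul_pos (hg t ht₁) (by linarith : 0 < 1 - b t * f t)
      have : 0 < ε * (t ^ 2)⁻¹ := by positivity
      linarith)
    ⟨hx, le_rfl⟩
  simpa using hfence

noncomputable def driftIntegral (a b : ℝ → ℝ) (x : ℝ) : ℝ := ∫ z in (0:ℝ)..x, b z / a z

noncomputable def scaleDensity (a b : ℝ → ℝ) (x : ℝ) : ℝ := Real.exp (-2 * driftIntegral a b x)

noncomputable def speedDensity (a b : ℝ → ℝ) (y : ℝ) : ℝ :=
  2 / a y * Real.exp (2 * driftIntegral a b y)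

noncomputable def speedMass (a b : ℝ → ℝ) (x : ℝ) : ℝ := ∫ y in (0:ℝ)..x, speedDensity a b y

section Diffusion

variable {a b : ℝ → ℝ}

theorem hasDerivAt_driftIntegral (ha : Continuous a) (ha_pos : ∀ x, 0 < a x) (hb : Continuous b)
    (x : ℝ) : HasDerivAt (driftIntegral a b) (b x / a x) x :=
  ((hb.div ha fun x => (ha_pos x).ne').integral_hasStrictDerivAt 0 x).hasDerivAt

theorem continuous_speedDensity (ha : Continuous a) (ha_pos : ∀ x, 0 < a x) (hb : Continuous b) :
    Continuous (speedDensity a b) :=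
  (continuous_const.div ha fun x => (ha_pos x).ne').mul
    (continuous_const.mul (continuous_iff_continuousAt.2 fun x =>
      (hasDerivAt_driftIntegral ha ha_pos hb x).continuousAt)).rexp

theorem speedMass_pos (ha : Continuous a) (ha_pos : ∀ x, 0 < a x) (hb : Continuous b)
    {x : ℝ} (hx : 0 < x) : 0 < speedMass a b x :=
  intervalIntegral.intervalIntegral_pos_of_pos
    ((continuous_speedDensity ha ha_pos hb).intervalIntegrable _ _)
    (fun y => mul_pos (div_pos two_pos (ha_pos y)) (Real.exp_pos _)) hx

theorem hasDerivAt_speedMass_mul_scaleDensity (ha : Continuous a) (ha_pos : ∀ x, 0 < a x)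
    (hb : Continuous b) (x : ℝ) :
    HasDerivAt (fun x => speedMass a b x * scaleDensity a b x)
      (2 / a x * (1 - b x * (speedMass a b x * scaleDensity a b x))) x := by
  have hI : HasDerivAt (speedMass a b) (speedDensity a b x) x :=
    ((continuous_speedDensity ha ha_pos hb).integral_hasStrictDerivAt 0 x).hasDerivAt
  have hs : HasDerivAt (scaleDensity a b) (scaleDensity a b x * (-2 * (b x / a x))) x :=
    ((hasDerivAt_driftIntegral ha ha_pos hb x).const_mul (-2)).exp
  refine (hI.mul hs).congr_deriv ?_
  have hexp : Real.exp (2 * driftIntegral a b x) * scaleDensity a b x = 1 := by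
    rw [scaleDensity, ← Real.exp_add, ← Real.exp_zero]; ring_nf
  rw [speedDensity]
  linear_combination (2 / a x) * hexp

end Diffusion

theorem stmt4_general (a b : ℝ → ℝ) (K : ℝ)
    (ha_cont : Continuous a) (ha_pos : ∀ x : ℝ, 0 < a x)
    (hb_cont : Continuous b) (hb : ∀ x : ℝ, |b x| ≤ K * (1 + |x|)) :
    ∫⁻ x in Set.Ioi (1:ℝ),
      ENNReal.ofReal
        ((∫ y in (0:ℝ)..x, (2 / a y) * Real.exp (2 * ∫ z in (0:ℝ)..y, b z / a z)) *
          Real.exp (-2 * ∫ z in (0:ℝ)..x, b z / a z)) = ⊤ := by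
  set f := fun x => speedMass a b x * scaleDensity a b x
  have hb_lin : ∀ x, 1 ≤ x → b x ≤ 2 * max K 1 * x := fun x hx => by
    have := (le_abs_self _).trans (hb x)
    rw [abs_of_nonneg (by linarith)] at this
    nlinarith [le_max_left K 1, le_max_right K 1]
  have hf₁ : 0 < f 1 := mul_pos (speedMass_pos ha_cont ha_pos hb_cont one_pos) (Real.exp_pos _)
  set c := min (f 1) (2 * (2 * max K 1))⁻¹
  have hc : 0 < c := lt_min hf₁ (by positivity)
  have hfence : ∀ x ∈ Ioi (1 : ℝ), c * x⁻¹ ≤ f x := fun x hx =>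
    const_mul_inv_le_of_hasDerivAt_eq_mul_one_sub (by positivity)
      (fun x _ => hasDerivAt_speedMass_mul_scaleDensity ha_cont ha_pos hb_cont x)
      (fun x _ => div_pos two_pos (ha_pos x)) hb_lin hf₁ (le_of_lt hx)
  exact eq_top_mono
    (setLIntegral_mono' measurableSet_Ioi fun x hx => ENNReal.ofReal_le_ofReal (hfence x hx))
    (lintegral_Ioi_ofReal_const_mul_inv_eq_top hc zero_le_one)

/-- Feller's criterion for inaccessibility of `+∞` under linear growth of
the drift: with `I(x) = ∫₀^x (2/a(y)) exp(2∫₀^y b/a) dy` and `s'(x) = exp(-2∫₀^x b/a)`,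
the integral `∫₁^∞ I(x) s'(x) dx` diverges. -/
theorem stmt4 (a b : ℝ → ℝ) (K : ℝ) (hK : 0 < K)
    (ha_cont : Continuous a) (ha_pos : ∀ x : ℝ, 0 < a x)
    (hb_cont : Continuous b) (hb : ∀ x : ℝ, |b x| ≤ K * (1 + |x|)) :
    ∫⁻ x in Set.Ioi (1:ℝ),
      ENNReal.ofReal
        ((∫ y in (0:ℝ)..x, (2 / a y) * Real.exp (2 * ∫ z in (0:ℝ)..y, b z / a z)) *
          Real.exp (-2 * ∫ z in (0:ℝ)..x, b z / a z)) = ⊤ :=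
  stmt4_general a b K ha_cont ha_pos hb_cont hb
end

section
/- Let T > 0, d ≥ 1, let S be a metric space, and for each y ∈ S let P^y be a Borel probability measure on the space C([0,T], ℝ^d) of continuous paths with the supremum metric, such that the map y ↦ P^y is continuous with respect to the topology of weak convergence of probability measures. For h ∈ (0,T] define Z_h(ω) = sup_{s,u ∈ [0,h]} ‖ω(s) − ω(u)‖. Then for every compact set K ⊆ S and every c > 0, lim_{h → 0⁺} sup_{y ∈ K} P^y({ω : Z_h(ω) > c}) = 0. -/
open MeasureTheory Filter

/-- The oscillation `Z_h(ω) = sup_{s,u ∈ [0,h]} ‖ω(s) - ω(u)‖` of a continuous path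
`ω ∈ C([0,T], ℝ^d)` over the initial time window `[0,h]`. -/
noncomputable def pathOsc6 (T : ℝ) (d : ℕ) (h : ℝ)
    (ω : C(Set.Icc (0:ℝ) T, EuclideanSpace ℝ (Fin d))) : ℝ :=
  sSup {r : ℝ | ∃ s u : Set.Icc (0:ℝ) T, (s:ℝ) ≤ h ∧ (u:ℝ) ≤ h ∧ r = ‖ω s - ω u‖}

variable {T : ℝ} {d : ℕ}


abbrev OscSet (T : ℝ) (d : ℕ) (h : ℝ) (ω : C(Set.Icc (0:ℝ) T, EuclideanSpace ℝ (Fin d))) : Set ℝ :=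
  {r : ℝ | ∃ s u : Set.Icc (0:ℝ) T, (s:ℝ) ≤ h ∧ (u:ℝ) ≤ h ∧ r = ‖ω s - ω u‖}

lemma oscSet_bdd (h : ℝ) (ω : C(Set.Icc (0:ℝ) T, EuclideanSpace ℝ (Fin d))) :
    BddAbove (OscSet T d h ω) := by
  refine ⟨2 * ‖ω‖, ?_⟩
  rintro r ⟨s, u, _, _, rfl⟩
  calc ‖ω s - ω u‖ ≤ ‖ω s‖ + ‖ω u‖ := norm_sub_le _ _
  _ ≤ ‖ω‖ + ‖ω‖ := add_le_add (ω.norm_coe_le_norm s) (ω.norm_coe_le_norm u)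
  _ = 2 * ‖ω‖ := by ring

lemma oscSet_mem_zero (hT : 0 < T) {h : ℝ} (hh : 0 ≤ h)
    (ω : C(Set.Icc (0:ℝ) T, EuclideanSpace ℝ (Fin d))) :
    (0:ℝ) ∈ OscSet T d h ω := by
  refine ⟨⟨0, le_refl _, hT.le⟩, ⟨0, le_refl _, hT.le⟩, hh, hh, by simp⟩

lemma pathOsc6_nonneg (hT : 0 < T) {h : ℝ} (hh : 0 ≤ h)
    (ω : C(Set.Icc (0:ℝ) T, EuclideanSpace ℝ (Fin d))) : 0 ≤ pathOsc6 T d h ω :=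
  le_csSup (oscSet_bdd h ω) (oscSet_mem_zero hT hh ω)

lemma pathOsc6_mono (hT : 0 < T) {h₁ h₂ : ℝ} (hh₁ : 0 ≤ h₁) (hle : h₁ ≤ h₂)
    (ω : C(Set.Icc (0:ℝ) T, EuclideanSpace ℝ (Fin d))) :
    pathOsc6 T d h₁ ω ≤ pathOsc6 T d h₂ ω := by
  refine csSup_le_csSup (oscSet_bdd h₂ ω) ⟨0, oscSet_mem_zero hT hh₁ ω⟩ ?_
  rintro r ⟨s, u, hs, hu, rfl⟩
  exact ⟨s, u, hs.trans hle, hu.trans hle, rfl⟩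

lemma pathOsc6_le_iff (hT : 0 < T) {h : ℝ} (hh : 0 ≤ h)
    (ω : C(Set.Icc (0:ℝ) T, EuclideanSpace ℝ (Fin d))) {a : ℝ} (ha : 0 ≤ a) :
    pathOsc6 T d h ω ≤ a ↔ ∀ s u : Set.Icc (0:ℝ) T, (s:ℝ) ≤ h → (u:ℝ) ≤ h → ‖ω s - ω u‖ ≤ a := by
  constructor
  · intro H s u hs hu
    exact le_trans (le_csSup (oscSet_bdd h ω) ⟨s, u, hs, hu, rfl⟩) H
  · intro H
    refine Real.sSup_le ?_ ha
    rintro r ⟨s, u, hs, hu, rfl⟩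
    exact H s u hs hu

lemma pathOsc6_lipschitz (hT : 0 < T) {h : ℝ} (hh : 0 ≤ h)
    (ω ω' : C(Set.Icc (0:ℝ) T, EuclideanSpace ℝ (Fin d))) :
    pathOsc6 T d h ω ≤ pathOsc6 T d h ω' + 2 * dist ω ω' := by
  refine Real.sSup_le ?_ (add_nonneg (pathOsc6_nonneg hT hh ω') (by positivity))
  rintro r ⟨s, u, hs, hu, rfl⟩
  have h1 : ‖ω s - ω u‖ ≤ ‖ω' s - ω' u‖ + 2 * dist ω ω' := by
    have d1 : dist (ω s) (ω' s) ≤ dist ω ω' := ContinuousMap.dist_apply_le_dist s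
    have d2 : dist (ω u) (ω' u) ≤ dist ω ω' := ContinuousMap.dist_apply_le_dist u
    calc ‖ω s - ω u‖ = dist (ω s) (ω u) := (dist_eq_norm _ _).symm
    _ ≤ dist (ω s) (ω' s) + dist (ω' s) (ω' u) + dist (ω' u) (ω u) := dist_triangle4 _ _ _ _
    _ ≤ dist ω ω' + dist (ω' s) (ω' u) + dist ω ω' := by
        gcongr; rw [dist_comm]; exact d2
    _ = dist ω ω' + ‖ω' s - ω' u‖ + dist ω ω' := by simp [dist_eq_norm]
    _ = ‖ω' s - ω' u‖ + 2 * dist ω ω' := by ring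
  exact h1.trans (by gcongr; exact le_csSup (oscSet_bdd h ω') ⟨s, u, hs, hu, rfl⟩)

lemma pathOsc6_continuous (hT : 0 < T) {h : ℝ} (hh : 0 ≤ h) :
    Continuous (fun ω => pathOsc6 T d h ω) := by
  have lip : LipschitzWith 2 (fun ω => pathOsc6 T d h ω) := by
    apply LipschitzWith.of_dist_le_mul
    intro ω ω'
    rw [Real.dist_eq, abs_sub_le_iff]
    constructor
    · have := pathOsc6_lipschitz hT hh ω ω'
      push_cast; linarith
    · have := pathOsc6_lipschitz hT hh ω' ω
      rw [dist_comm] at this; push_cast; linarith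
  exact lip.continuous

lemma pathOsc6_small (hT : 0 < T) {c : ℝ} (hc : 0 < c)
    (ω : C(Set.Icc (0:ℝ) T, EuclideanSpace ℝ (Fin d))) :
    ∃ δ > (0:ℝ), pathOsc6 T d δ ω < c := by
  have p0 : Set.Icc (0:ℝ) T := ⟨0, le_refl _, hT.le⟩
  obtain ⟨δ, hδpos, hδ⟩ := Metric.continuousAt_iff.mp (ω.continuous.continuousAt (x := ⟨0, le_refl _, hT.le⟩)) (c/3) (by linarith)
  refine ⟨δ/2, by linarith, ?_⟩
  have key : ∀ s : Set.Icc (0:ℝ) T, (s:ℝ) ≤ δ/2 → dist (ω s) (ω ⟨0, le_refl _, hT.le⟩) < c/3 := by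
    intro s hs
    apply hδ
    rw [Subtype.dist_eq, Real.dist_eq]
    simp only [sub_zero]
    rw [abs_of_nonneg s.2.1]
    linarith
  have : pathOsc6 T d (δ/2) ω ≤ 2*c/3 := by
    rw [pathOsc6_le_iff hT (by linarith) ω (by linarith)]
    intro s u hs hu
    have := key s hs
    have := key u hu
    calc ‖ω s - ω u‖ = dist (ω s) (ω u) := (dist_eq_norm _ _).symm
    _ ≤ dist (ω s) (ω ⟨0, le_refl _, hT.le⟩) + dist (ω ⟨0, le_refl _, hT.le⟩) (ω u) := dist_triangle _ _ _
    _ ≤ c/3 + c/3 := by rw [dist_comm (ω ⟨0, le_refl _, hT.le⟩)]; exact add_le_add (key s hs).le (key u hu).le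
    _ = 2*c/3 := by ring
  linarith


/-- if `y ↦ P^y` is a weakly continuous family of Borel probability measures
on `C([0,T], ℝ^d)` indexed by a metric space `S`, then for every compact `K ⊆ S` and
every `c > 0`, `sup_{y ∈ K} P^y(Z_h > c) → 0` as `h → 0⁺`. -/
theorem stmt6 (T : ℝ) (hT : 0 < T) (d : ℕ) (hd : 1 ≤ d)
    [mΩ : MeasurableSpace C(Set.Icc (0:ℝ) T, EuclideanSpace ℝ (Fin d))]
    [BorelSpace C(Set.Icc (0:ℝ) T, EuclideanSpace ℝ (Fin d))]
    {S : Type*} [MetricSpace S]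
    (P : S → ProbabilityMeasure C(Set.Icc (0:ℝ) T, EuclideanSpace ℝ (Fin d)))
    (hP : Continuous P)
    (K : Set S) (hK : IsCompact K) (c : ℝ) (hc : 0 < c) :
    Tendsto (fun h : ℝ => ⨆ y ∈ K,
        (P y : Measure C(Set.Icc (0:ℝ) T, EuclideanSpace ℝ (Fin d)))
          {ω | c < pathOsc6 T d h ω})
      (nhdsWithin 0 (Set.Ioi 0)) (nhds 0) := by
  let Ω := C(Set.Icc (0:ℝ) T, EuclideanSpace ℝ (Fin d))
  rcases K.eq_empty_or_nonempty with rfl | hKne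
  · simp only [Set.mem_empty_iff_false, iSup_false, iSup_bot, ciSup_of_empty]
    exact tendsto_const_nhds
  have Fclosed : ∀ h : ℝ, 0 ≤ h → IsClosed {ω : Ω | c ≤ pathOsc6 T d h ω} := by
    intro h hh
    exact isClosed_le continuous_const (pathOsc6_continuous hT hh)
  rw [ENNReal.tendsto_nhds_zero]
  intro ε hε
  -- key claim
  have key : ∀ y ∈ K, ∃ hy > (0:ℝ), ∃ U ∈ nhds y, ∀ y' ∈ U,
      (P y' : Measure Ω) {ω : Ω | c ≤ pathOsc6 T d hy ω} < ε := by
    intro y _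
    set F : ℕ → Set Ω := fun n => {ω : Ω | c ≤ pathOsc6 T d (1/(n+1)) ω} with hF
    have hpos : ∀ n : ℕ, (0:ℝ) < 1/(n+1) := by
      intro n; positivity
    have hFmeas : ∀ n, NullMeasurableSet (F n) (P y : Measure Ω) :=
      fun n => ((Fclosed _ (hpos n).le).measurableSet).nullMeasurableSet
    have hFanti : Antitone F := by
      intro n m hnm ω hω
      refine le_trans hω (pathOsc6_mono hT (hpos m).le ?_ ω)
      apply one_div_le_one_div_of_le (by positivity)
      have : (n:ℝ) ≤ m := Nat.cast_le.mpr hnm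
      linarith
    have hFempty : ⋂ n, F n = ∅ := by
      ext ω
      simp only [Set.mem_iInter, Set.mem_empty_iff_false, iff_false, not_forall]
      obtain ⟨δ, hδpos, hδ⟩ := pathOsc6_small hT hc ω
      obtain ⟨n, hn⟩ := exists_nat_one_div_lt hδpos
      refine ⟨n, ?_⟩
      simp only [hF, Set.mem_setOf_eq, not_le]
      exact lt_of_le_of_lt (pathOsc6_mono hT (hpos n).le hn.le ω) hδ
    have htend : Tendsto (fun n => (P y : Measure Ω) (F n)) atTop (nhds 0) := by
      have := tendsto_measure_iInter_atTop (μ := (P y : Measure Ω)) hFmeas hFanti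
        ⟨0, measure_ne_top _ _⟩
      rwa [hFempty, measure_empty] at this
    obtain ⟨n, hn⟩ := (htend.eventually_lt_const hε).exists
    refine ⟨1/(n+1), hpos n, ?_⟩
    have husc := ProbabilityMeasure.limsup_measure_closed_le_of_tendsto
      (μ := P y) (μs := P) (hP.tendsto y) (Fclosed _ (hpos n).le)
    have hev : ∀ᶠ y' in nhds y, (P y' : Measure Ω) {ω : Ω | c ≤ pathOsc6 T d (1/(n+1)) ω} < ε :=
      eventually_lt_of_limsup_lt (lt_of_le_of_lt husc hn)
    obtain ⟨U, hU, hU'⟩ := eventually_iff_exists_mem.mp hev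
    exact ⟨U, hU, hU'⟩
  choose! hy hypos U hU hUlt using key
  obtain ⟨t, htcov⟩ := hK.elim_nhds_subcover' (fun y hy' => U y) (fun y hy' => hU y hy')
  by_cases htne : t.Nonempty
  · set h0 : ℝ := t.inf' htne (fun x => hy x) with hh0
    have h0pos : 0 < h0 := by
      rw [hh0, Finset.lt_inf'_iff]
      exact fun x hx => hypos x x.2
    have h0le : ∀ x ∈ t, h0 ≤ hy x := fun x hx => Finset.inf'_le _ hx
    filter_upwards [Ioc_mem_nhdsGT h0pos] with h hh
    refine iSup₂_le fun y hyK => ?_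
    have hmem := htcov hyK
    simp only [Set.mem_iUnion, exists_prop] at hmem
    obtain ⟨x, hxt, hyU⟩ := hmem
    refine le_trans (measure_mono ?_) (hUlt x x.2 y hyU).le
    intro ω hω
    have h1 : pathOsc6 T d h ω ≤ pathOsc6 T d (hy x) ω :=
      pathOsc6_mono hT hh.1.le (hh.2.trans (h0le x hxt)) ω
    exact le_trans (le_of_lt hω) h1
  · exfalso
    rw [Finset.not_nonempty_iff_eq_empty] at htne
    obtain ⟨y, hyK⟩ := hKne
    have := htcov hyK
    simp [htne] at this
end

section
/- Let (Ω, 𝒜, P) be a probability space with a filtration (ℱ_s)_{s ∈ [0,t]} for some t > 0, let (E, ρ) be a metric space with Borel σ-algebra ℰ and a σ-finite measure m, and let X = (X_s)_{s ∈ [0,t]} be an (ℱ_s)-adapted E-valued process with continuous sample paths and X_0 = x P-a.s. for a fixed x ∈ E. Let p : (0,∞) × E × E → [0,∞) be jointly measurable and fix z ∈ E with 0 < p(t,x,z) < ∞. Assume: (i) for all 0 ≤ s ≤ u < t, every nonnegative measurable g : E → [0,∞] and every A ∈ ℱ_s, ∫_A g(X_u) dP = ∫_A (∫_E g(y) p(u−s,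 X_s, y) m(dy)) dP; (ii) for all v, w > 0 and all x′, z′ ∈ E, ∫_E p(v, x′, y) p(w, y, z′) m(dy) = p(v+w, x′, z′); (iii) for P-a.e. ω the map s ↦ M_s(ω) := p(t−s, X_s(ω), z) is right-continuous with left limits on [0,t); (iv) for every r > 0, lim_{u → t⁻} ∫_{{y ∈ E : ρ(y,z) ≥ r}} p(t−u, y, z) p(u, x, y) m(dy) = 0; (v) P(X_t = z) = 0. Then the limit M_t := lim_{s → t⁻} M_s exists P-a.s. and M_t = 0 P-a.s.; moreover, setting M_t := 0, the process (M_s)_{s ∈ [0,t]} is a supermartingale with respect to (ℱ_s) under P. -/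
/-!
By the Markov property and Chapman–Kolmogorov, `M_s = p(t - s, X_s, z)` is a nonnegative
martingale on `[0, t)` with mean `p(t, x, z)`; setting `M_t := 0` only lowers the terminal value,
so the extended process is a supermartingale.

For the limit at `t⁻`: since `X_t ≠ z` a.s. and paths are continuous, a.s. the path stays at
distance `≥ r` from `z` on some `[v, t]`. Restricted to such paths, `M` remains a nonnegative
supermartingale, and the maximal inequality bounds the probability that it exceeds `ε` after
time `w` by `E[M_w; ρ(X_w, z) ≥ r] = ∫_{ρ(y,z) ≥ r} p(t - w, y, z) p(w, x, y) m(dy)`, which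
tends to `0` as `w → t⁻` by the duality condition. Right continuity passes from rational times
to all times.
-/

open MeasureTheory Filter Set Topology
open scoped ENNReal

section MaximalInequality

variable {ι Ω : Type*} [LinearOrder ι] {mΩ : MeasurableSpace Ω} {μ : Measure Ω}
  {ℱ : Filtration ι mΩ} {ψ : ι → Ω → ℝ≥0∞} {T : Set ι}

theorem mul_measure_inter_exists_ge_le_setLIntegral
    (hψ : ∀ i ∈ T, Measurable[ℱ i] (ψ i))
    (hsuper : ∀ i ∈ T, ∀ j ∈ T, i ≤ j → ∀ B, MeasurableSet[ℱ i] B →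
      ∫⁻ ω in B, ψ j ω ∂μ ≤ ∫⁻ ω in B, ψ i ω ∂μ)
    (ε : ℝ≥0∞) (S : Finset ι) (hST : ↑S ⊆ T) {i : ι} (hi : i ∈ T) {B : Set Ω}
    (hB : MeasurableSet[ℱ i] B) :
    ε * μ (B ∩ {ω | ∃ j ∈ S, i ≤ j ∧ ε ≤ ψ j ω}) ≤ ∫⁻ ω in B, ψ i ω ∂μ := by
  classical
  induction S using Finset.induction_on_min generalizing i B with
  | empty => simp
  | insert a S hmin ih =>
    have hST' : ↑S ⊆ T := (Finset.coe_subset.2 (Finset.subset_insert a S)).trans hST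
    by_cases hia : i ≤ a
    · have haT : a ∈ T := hST (Finset.mem_insert_self a S)
      set L := {ω | ε ≤ ψ a ω}
      have hL : MeasurableSet[ℱ a] L := measurableSet_le measurable_const (hψ a haT)
      have hBa : MeasurableSet[ℱ a] B := ℱ.mono hia _ hB
      have hcover : B ∩ {ω | ∃ j ∈ insert a S, i ≤ j ∧ ε ≤ ψ j ω}
          ⊆ (B ∩ L) ∪ ((B \ L) ∩ {ω | ∃ j ∈ S, a ≤ j ∧ ε ≤ ψ j ω}) := by
        rintro ω ⟨hωB, j, hj, -, hεj⟩
        by_cases hωL : ω ∈ L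
        · exact Or.inl ⟨hωB, hωL⟩
        · rcases Finset.mem_insert.1 hj with rfl | hjS
          · exact absurd hεj hωL
          · exact Or.inr ⟨⟨hωB, hωL⟩, j, hjS, (hmin j hjS).le, hεj⟩
      have hmarkov : ε * μ (B ∩ L) ≤ ∫⁻ ω in B ∩ L, ψ a ω ∂μ := by
        rw [← setLIntegral_const]
        exact setLIntegral_mono' (ℱ.le a _ (hBa.inter hL)) fun ω hω => hω.2
      calc ε * μ (B ∩ {ω | ∃ j ∈ insert a S, i ≤ j ∧ ε ≤ ψ j ω})
          ≤ ε * (μ (B ∩ L) + μ ((B \ L) ∩ {ω | ∃ j ∈ S, a ≤ j ∧ ε ≤ ψ j ω})) :=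
            mul_le_mul_right ((measure_mono hcover).trans (measure_union_le _ _)) ε
        _ ≤ ∫⁻ ω in B ∩ L, ψ a ω ∂μ + ∫⁻ ω in B \ L, ψ a ω ∂μ := by
            rw [mul_add]
            exact add_le_add hmarkov (ih hST' haT (hBa.diff hL))
        _ = ∫⁻ ω in B, ψ a ω ∂μ := lintegral_inter_add_sdiff _ _ (ℱ.le a _ hL)
        _ ≤ ∫⁻ ω in B, ψ i ω ∂μ := hsuper i hi a haT hia B hB
    · refine le_trans (mul_le_mul_right (measure_mono ?_) ε) (ih hST' hi hB)
      rintro ω ⟨hωB, j, hj, hij, hεj⟩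
      rcases Finset.mem_insert.1 hj with rfl | hjS
      · exact absurd hij hia
      · exact ⟨hωB, j, hjS, hij, hεj⟩

theorem mul_measure_exists_ge_le_lintegral
    (hψ : ∀ i ∈ T, Measurable[ℱ i] (ψ i))
    (hsuper : ∀ i ∈ T, ∀ j ∈ T, i ≤ j → ∀ B, MeasurableSet[ℱ i] B →
      ∫⁻ ω in B, ψ j ω ∂μ ≤ ∫⁻ ω in B, ψ i ω ∂μ)
    (ε : ℝ≥0∞) (hT : T.Countable) {i : ι} (hi : i ∈ T) :
    ε * μ {ω | ∃ j ∈ T, i ≤ j ∧ ε ≤ ψ j ω} ≤ ∫⁻ ω, ψ i ω ∂μ := by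
  classical
  obtain ⟨f, rfl⟩ := hT.exists_eq_range ⟨i, hi⟩
  set A : ℕ → Set Ω := fun n => {ω | ∃ j ∈ (Finset.range n).image f, i ≤ j ∧ ε ≤ ψ j ω}
  have hA : Monotone A := fun n n' hnn' ω ⟨j, hj, hij⟩ =>
    ⟨j, Finset.image_subset_image (Finset.range_subset_range.2 hnn') hj, hij⟩
  have hunion : {ω | ∃ j ∈ range f, i ≤ j ∧ ε ≤ ψ j ω} = ⋃ n, A n := by
    ext ω
    simp only [A, mem_ofPred_eq, mem_iUnion, Finset.mem_image, Finset.mem_range, mem_range]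
    constructor
    · rintro ⟨_, ⟨k, rfl⟩, hj⟩
      exact ⟨k + 1, f k, ⟨k, k.lt_succ_self, rfl⟩, hj⟩
    · rintro ⟨-, _, ⟨k, -, rfl⟩, hj⟩
      exact ⟨f k, ⟨k, rfl⟩, hj⟩
  rw [hunion, hA.measure_iUnion, ENNReal.mul_iSup]
  refine iSup_le fun n => ?_
  have hsub : ↑((Finset.range n).image f) ⊆ range f := by simp
  simpa [A] using mul_measure_inter_exists_ge_le_setLIntegral hψ hsuper ε _ hsub hi
    MeasurableSet.univ

end MaximalInequality

theorem tendsto_nhdsLT_zero_of_forall_rat_lt {f : ℝ → ℝ} {a t : ℝ} (hat : a < t)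
    (hf : ∀ u ∈ Ico a t, Tendsto f (𝓝[≥] u) (𝓝 (f u))) (hnn : ∀ u ∈ Ico a t, 0 ≤ f u)
    (hsmall : ∀ ε > 0, ∃ w < t, ∀ q : ℚ, w ≤ q → (q : ℝ) < t → f q < ε) :
    Tendsto f (𝓝[<] t) (𝓝 0) := by
  rw [Metric.tendsto_nhds]
  intro ε hε
  obtain ⟨w, hwt, hw⟩ := hsmall (ε / 2) (half_pos hε)
  have hle : ∀ u ∈ Ico (max a w) t, f u ≤ ε / 2 := by
    intro u hu
    refine le_of_tendsto_of_frequently (hf u ⟨le_of_max_le_left hu.1, hu.2⟩)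
      (frequently_iff.2 fun {U} hU => ?_)
    obtain ⟨b, hub, hb⟩ := mem_nhdsGE_iff_exists_Ico_subset.1 hU
    obtain ⟨q, huq, hq⟩ := exists_rat_btwn (lt_min hub hu.2)
    exact ⟨q, hb ⟨huq.le, hq.trans_le (min_le_left _ _)⟩,
      (hw q ((le_of_max_le_right hu.1).trans huq.le) (hq.trans_le (min_le_right _ _))).le⟩
  filter_upwards [Ioo_mem_nhdsLT (max_lt hat hwt)] with u hu
  rw [Real.dist_eq, sub_zero, abs_of_nonneg (hnn u ⟨(le_max_left _ _).trans hu.1.le, hu.2⟩)]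
  exact (hle u ⟨hu.1.le, hu.2⟩).trans_lt (half_lt_self hε)

theorem exists_nat_rat_forall_Icc_le_dist {E : Type*} [MetricSpace E] {γ : ℝ → E} {t : ℝ}
    {z : E} (ht : 0 < t) (hγ : ContinuousWithinAt γ (Icc 0 t) t) (hne : γ t ≠ z) :
    ∃ (k : ℕ) (v : ℚ), 0 ≤ (v : ℝ) ∧ (v : ℝ) < t ∧
      ∀ u ∈ Icc (v : ℝ) t, 1 / ((k : ℝ) + 1) ≤ dist (γ u) z := by
  obtain ⟨k, hk⟩ := exists_nat_one_div_lt (dist_pos.2 hne)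
  have hev : ∀ᶠ u in 𝓝[≤] t, 1 / ((k : ℝ) + 1) < dist (γ u) z := by
    rw [← nhdsWithin_Icc_eq_nhdsLE ht]
    exact (hγ.dist continuousWithinAt_const).eventually_const_lt hk
  obtain ⟨l, hlt, hl⟩ := mem_nhdsLE_iff_exists_Ioc_subset.1 hev
  obtain ⟨v, hv, hvt⟩ := exists_rat_btwn (max_lt hlt ht)
  exact ⟨k, v, (le_max_right _ _).trans hv.le, hvt,
    fun u hu => (hl ⟨(le_max_left _ _).trans_lt (hv.trans_le hu.1), hu.2⟩).le⟩

theorem eq_zero_of_forall_rat_le_of_tendsto {D : ℝ → ℝ≥0∞} {c : ℝ≥0∞} {v t : ℝ}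
    (hvt : v < t) (hD : Tendsto D (𝓝[<] t) (𝓝 0)) (hc : ∀ q : ℚ, v < q → (q : ℝ) < t → c ≤ D q) :
    c = 0 := by
  by_contra hc0
  obtain ⟨l, hlt, hl⟩ :=
    mem_nhdsLT_iff_exists_Ioo_subset.1 (hD.eventually_lt_const (pos_iff_ne_zero.2 hc0))
  obtain ⟨q, hq, hqt⟩ := exists_rat_btwn (max_lt hvt hlt)
  exact (hc q ((le_max_left _ _).trans_lt hq) hqt).not_gt
    (hl ⟨(le_max_right _ _).trans_lt hq, hqt⟩)

section DensityProcess

variable {Ω E : Type*} {mΩ : MeasurableSpace Ω} [MeasurableSpace E]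

def HasTransitionDensity (P : Measure Ω) (ℱ : Filtration ℝ mΩ) (X : ℝ → Ω → E) (m : Measure E)
    (p : ℝ → E → E → ℝ) (t : ℝ) : Prop :=
  ∀ s u : ℝ, 0 ≤ s → s ≤ u → u < t → ∀ g : E → ℝ≥0∞, Measurable g →
    ∀ A : Set Ω, MeasurableSet[ℱ s] A →
      ∫⁻ ω in A, g (X u ω) ∂P = ∫⁻ ω in A, ∫⁻ y, g y * ENNReal.ofReal (p (u - s) (X s ω) y) ∂m ∂P

def ChapmanKolmogorov (m : Measure E) (p : ℝ → E → E → ℝ) : Prop :=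
  ∀ v w : ℝ, 0 < v → 0 < w → ∀ x' z' : E,
    ∫⁻ y, ENNReal.ofReal (p v x' y) * ENNReal.ofReal (p w y z') ∂m
      = ENNReal.ofReal (p (v + w) x' z')

variable {P : Measure Ω} {ℱ : Filtration ℝ mΩ} {X : ℝ → Ω → E} {m : Measure E}
  {p : ℝ → E → E → ℝ} {t : ℝ} {x : E}

theorem measurable_density_left (hp_meas : Measurable fun q : ℝ × E × E => p q.1 q.2.1 q.2.2)
    (a : ℝ) (z : E) : Measurable fun y => p a y z :=
  hp_meas.comp (measurable_const.prodMk (measurable_id.prodMk measurable_const))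

theorem setLIntegral_density_eq (hMarkov : HasTransitionDensity P ℱ X m p t)
    (hCK : ChapmanKolmogorov m p) (hp_meas : Measurable fun q : ℝ × E × E => p q.1 q.2.1 q.2.2)
    (z : E) {w u : ℝ} (hw : 0 ≤ w) (hwu : w ≤ u) (hut : u < t) {A : Set Ω}
    (hA : MeasurableSet[ℱ w] A) :
    ∫⁻ ω in A, ENNReal.ofReal (p (t - u) (X u ω) z) ∂P
      = ∫⁻ ω in A, ENNReal.ofReal (p (t - w) (X w ω) z) ∂P := by
  rcases hwu.eq_or_lt with rfl | hwu
  · rfl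
  rw [hMarkov w u hw hwu.le hut _ (measurable_density_left hp_meas _ z).ennreal_ofReal A hA]
  refine lintegral_congr fun ω => ?_
  simp_rw [mul_comm (ENNReal.ofReal (p (t - u) _ z))]
  rw [hCK (u - w) (t - u) (by linarith) (by linarith), sub_add_sub_cancel']

theorem lintegral_density_eq [IsProbabilityMeasure P] (hMarkov : HasTransitionDensity P ℱ X m p t)
    (hCK : ChapmanKolmogorov m p) (hp_meas : Measurable fun q : ℝ × E × E => p q.1 q.2.1 q.2.2)
    (hx : ∀ᵐ ω ∂P, X 0 ω = x) (z : E) {u : ℝ} (hu : 0 ≤ u) (hut : u < t) :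
    ∫⁻ ω, ENNReal.ofReal (p (t - u) (X u ω) z) ∂P = ENNReal.ofReal (p t x z) := by
  have h := setLIntegral_density_eq hMarkov hCK hp_meas z le_rfl hu hut MeasurableSet.univ
  rw [setLIntegral_univ, setLIntegral_univ] at h
  rw [h, lintegral_congr_ae (hx.mono fun ω hω => by rw [hω, sub_zero]), lintegral_const,
    measure_univ, mul_one]

theorem integrable_density [IsProbabilityMeasure P] (hMarkov : HasTransitionDensity P ℱ X m p t)
    (hCK : ChapmanKolmogorov m p) (hp_meas : Measurable fun q : ℝ × E × E => p q.1 q.2.1 q.2.2)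
    (hp_nonneg : ∀ (v : ℝ) (x' z' : E), 0 < v → 0 ≤ p v x' z')
    (hX_meas : ∀ s : ℝ, 0 ≤ s → s ≤ t → Measurable[ℱ s] (X s)) (hx : ∀ᵐ ω ∂P, X 0 ω = x)
    (z : E) {s : ℝ} (hs : 0 ≤ s) (hst : s < t) :
    Integrable (fun ω => p (t - s) (X s ω) z) P := by
  refine ⟨((measurable_density_left hp_meas _ z).comp
    ((hX_meas s hs hst.le).mono (ℱ.le s) le_rfl)).aestronglyMeasurable, ?_⟩
  rw [hasFiniteIntegral_iff_ofReal (ae_of_all _ fun ω => hp_nonneg _ _ _ (sub_pos.2 hst)),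
    lintegral_density_eq hMarkov hCK hp_meas hx z hs hst]
  exact ENNReal.ofReal_lt_top

theorem density_ae_eq_condExp [IsProbabilityMeasure P] (hMarkov : HasTransitionDensity P ℱ X m p t)
    (hCK : ChapmanKolmogorov m p) (hp_meas : Measurable fun q : ℝ × E × E => p q.1 q.2.1 q.2.2)
    (hp_nonneg : ∀ (v : ℝ) (x' z' : E), 0 < v → 0 ≤ p v x' z')
    (hX_meas : ∀ s : ℝ, 0 ≤ s → s ≤ t → Measurable[ℱ s] (X s)) (hx : ∀ᵐ ω ∂P, X 0 ω = x)
    (z : E) {s u : ℝ} (hs : 0 ≤ s) (hsu : s ≤ u) (hut : u < t) :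
    (fun ω => p (t - s) (X s ω) z) =ᵐ[P] P[fun ω => p (t - u) (X u ω) z|ℱ s] := by
  have hst := hsu.trans_lt hut
  have hint {s : ℝ} (hs : 0 ≤ s) (hst : s < t) :=
    integrable_density hMarkov hCK hp_meas hp_nonneg hX_meas hx z hs hst
  refine ae_eq_condExp_of_forall_setIntegral_eq (ℱ.le s) (hint (hs.trans hsu) hut)
    (fun A _ _ => (hint hs hst).integrableOn) (fun A hA _ => ?_)
    ((measurable_density_left hp_meas _ z).comp (hX_meas s hs hst.le)).aestronglyMeasurable
  rw [integral_eq_lintegral_of_nonneg_ae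
      (ae_of_all _ fun ω => hp_nonneg _ _ _ (sub_pos.2 hst)) (hint hs hst).1.restrict,
    integral_eq_lintegral_of_nonneg_ae
      (ae_of_all _ fun ω => hp_nonneg _ _ _ (sub_pos.2 hut)) (hint (hs.trans hsu) hut).1.restrict,
    setLIntegral_density_eq hMarkov hCK hp_meas z hs hsu hut hA]

variable [MetricSpace E] [OpensMeasurableSpace E]

theorem setLIntegral_density_far_eq [IsProbabilityMeasure P]
    (hMarkov : HasTransitionDensity P ℱ X m p t)
    (hp_meas : Measurable fun q : ℝ × E × E => p q.1 q.2.1 q.2.2)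
    (hX_meas : ∀ s : ℝ, 0 ≤ s → s ≤ t → Measurable[ℱ s] (X s)) (hx : ∀ᵐ ω ∂P, X 0 ω = x)
    (z : E) {w : ℝ} (hw : 0 ≤ w) (hwt : w < t) (r : ℝ) :
    ∫⁻ ω in {ω | r ≤ dist (X w ω) z}, ENNReal.ofReal (p (t - w) (X w ω) z) ∂P
      = ∫⁻ y in {y | r ≤ dist y z},
          ENNReal.ofReal (p (t - w) y z) * ENNReal.ofReal (p w x y) ∂m := by
  set S := {y : E | r ≤ dist y z}
  set F := fun y => ENNReal.ofReal (p (t - w) y z)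
  have hS : MeasurableSet S :=
    measurableSet_le measurable_const (continuous_id.dist continuous_const).measurable
  have hF : Measurable (S.indicator F) :=
    (measurable_density_left hp_meas _ z).ennreal_ofReal.indicator hS
  have hMarkov0 := hMarkov 0 w le_rfl hw hwt _ hF univ MeasurableSet.univ
  rw [setLIntegral_univ, setLIntegral_univ] at hMarkov0
  calc ∫⁻ ω in X w ⁻¹' S, F (X w ω) ∂P
      = ∫⁻ ω, S.indicator F (X w ω) ∂P := by
        rw [← lintegral_indicator ((hX_meas w hw hwt.le).mono (ℱ.le w) le_rfl hS)]
        simp_rw [← indicator_comp_right]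
        rfl
    _ = ∫⁻ y, S.indicator F y * ENNReal.ofReal (p w x y) ∂m := by
        rw [hMarkov0, lintegral_congr_ae (hx.mono fun ω hω => by rw [hω, sub_zero]),
          lintegral_const, measure_univ, mul_one]
    _ = ∫⁻ y in S, F y * ENNReal.ofReal (p w x y) ∂m := by
        rw [← lintegral_indicator hS]
        simp_rw [indicator_mul_left]

-- Only rational times, so that the set is a countable intersection and hence `ℱ s`-measurable.
def ratFarSet (X : ℝ → Ω → E) (z : E) (r v s : ℝ) : Set Ω :=
  {ω | ∀ q : ℚ, v ≤ q → (q : ℝ) ≤ s → r ≤ dist (X q ω) z}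

theorem measurableSet_ratFarSet (hX_meas : ∀ s : ℝ, 0 ≤ s → s ≤ t → Measurable[ℱ s] (X s))
    (z : E) (r : ℝ) {v s : ℝ} (hv : 0 ≤ v) (hst : s ≤ t) :
    MeasurableSet[ℱ s] (ratFarSet X z r v s) := by
  have hS : MeasurableSet {y : E | r ≤ dist y z} :=
    measurableSet_le measurable_const (continuous_id.dist continuous_const).measurable
  rw [ratFarSet, ofPred_forall]
  refine MeasurableSet.iInter fun q => ?_
  by_cases hq : v ≤ q ∧ (q : ℝ) ≤ s
  · simpa [hq.1, hq.2] using ℱ.mono hq.2 _ (hX_meas q (hv.trans hq.1) (hq.2.trans hst) hS)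
  · rw [eq_univ_of_forall fun ω hvq hqs => (hq ⟨hvq, hqs⟩).elim]
    exact MeasurableSet.univ

theorem setLIntegral_indicator_ratFarSet_le (hMarkov : HasTransitionDensity P ℱ X m p t)
    (hCK : ChapmanKolmogorov m p) (hp_meas : Measurable fun q : ℝ × E × E => p q.1 q.2.1 q.2.2)
    (hX_meas : ∀ s : ℝ, 0 ≤ s → s ≤ t → Measurable[ℱ s] (X s)) (z : E) (r : ℝ) {v w u : ℝ}
    (hv : 0 ≤ v) (hvw : v ≤ w) (hwu : w ≤ u) (hut : u < t) {B : Set Ω}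
    (hB : MeasurableSet[ℱ w] B) :
    ∫⁻ ω in B, (ratFarSet X z r v u).indicator
        (fun ω => ENNReal.ofReal (p (t - u) (X u ω) z)) ω ∂P
      ≤ ∫⁻ ω in B, (ratFarSet X z r v w).indicator
        (fun ω => ENNReal.ofReal (p (t - w) (X w ω) z)) ω ∂P := by
  have hCw := measurableSet_ratFarSet hX_meas z r hv (hwu.trans hut.le)
  rw [lintegral_indicator (ℱ.le u _ (measurableSet_ratFarSet hX_meas z r hv hut.le)),
    lintegral_indicator (ℱ.le w _ hCw), Measure.restrict_restrict (ℱ.le w _ hCw),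
    Measure.restrict_restrict (ℱ.le u _ (measurableSet_ratFarSet hX_meas z r hv hut.le)),
    ← setLIntegral_density_eq hMarkov hCK hp_meas z (hv.trans hvw) hwu hut (hCw.inter hB)]
  exact lintegral_mono_set (inter_subset_inter_left B
    fun ω hω q hvq hqw => hω q hvq (hqw.trans hwu))

theorem ae_exists_forall_rat_density_lt [IsProbabilityMeasure P]
    (hMarkov : HasTransitionDensity P ℱ X m p t)
    (hCK : ChapmanKolmogorov m p) (hp_meas : Measurable fun q : ℝ × E × E => p q.1 q.2.1 q.2.2)
    (hX_meas : ∀ s : ℝ, 0 ≤ s → s ≤ t → Measurable[ℱ s] (X s)) (hx : ∀ᵐ ω ∂P, X 0 ω = x)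
    {z : E} {r : ℝ}
    (hdual : Tendsto (fun u => ∫⁻ y in {y : E | r ≤ dist y z},
      ENNReal.ofReal (p (t - u) y z) * ENNReal.ofReal (p u x y) ∂m) (𝓝[<] t) (𝓝 0))
    {v : ℝ} (hv : 0 ≤ v) (hvt : v < t) {ε : ℝ} (hε : 0 < ε) :
    ∀ᵐ ω ∂P, (∀ u ∈ Icc v t, r ≤ dist (X u ω) z) →
      ∃ w < t, ∀ q : ℚ, w ≤ q → (q : ℝ) < t → p (t - q) (X q ω) z < ε := by
  set ψ : ℝ → Ω → ℝ≥0∞ := fun s =>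
    (ratFarSet X z r v s).indicator fun ω => ENNReal.ofReal (p (t - s) (X s ω) z)
  set bad := {ω | (∀ u ∈ Icc v t, r ≤ dist (X u ω) z) ∧
    ∀ w < t, ∃ q : ℚ, w ≤ q ∧ (q : ℝ) < t ∧ ε ≤ p (t - q) (X q ω) z}
  set T : Set ℝ := (↑) '' {q : ℚ | v ≤ q ∧ (q : ℝ) < t}
  have hT : T ⊆ Ico v t := by
    rintro _ ⟨q, hq, rfl⟩
    exact hq
  have hψ : ∀ s ∈ T, Measurable[ℱ s] (ψ s) := fun s hs =>
    ((measurable_density_left hp_meas _ z).comp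
      (hX_meas s (hv.trans (hT hs).1) (hT hs).2.le)).ennreal_ofReal.indicator
      (measurableSet_ratFarSet hX_meas z r hv (hT hs).2.le)
  have hsuper : ∀ s ∈ T, ∀ s' ∈ T, s ≤ s' → ∀ B, MeasurableSet[ℱ s] B →
      ∫⁻ ω in B, ψ s' ω ∂P ≤ ∫⁻ ω in B, ψ s ω ∂P := fun s hs s' hs' hss' _ hB =>
    setLIntegral_indicator_ratFarSet_le hMarkov hCK hp_meas hX_meas z r hv (hT hs).1 hss'
      (hT hs').2 hB
  have hbound : ∀ w : ℚ, v < w → (w : ℝ) < t → ENNReal.ofReal ε * P bad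
      ≤ ∫⁻ y in {y : E | r ≤ dist y z},
          ENNReal.ofReal (p (t - w) y z) * ENNReal.ofReal (p w x y) ∂m := by
    intro w hvw hwt
    have hbad : bad ⊆ {ω | ∃ j ∈ T, (w : ℝ) ≤ j ∧ ENNReal.ofReal ε ≤ ψ j ω} := by
      rintro ω ⟨hfar, hfreq⟩
      obtain ⟨q, hwq, hqt, hεq⟩ := hfreq w hwt
      have hω : ω ∈ ratFarSet X z r v q := fun q' hvq' hq'q => hfar q' ⟨hvq', hq'q.trans hqt.le⟩
      exact ⟨q, ⟨q, ⟨hvw.le.trans hwq, hqt⟩, rfl⟩, hwq,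
        by simpa [ψ, indicator_of_mem hω] using ENNReal.ofReal_le_ofReal hεq⟩
    calc ENNReal.ofReal ε * P bad
        ≤ ENNReal.ofReal ε * P {ω | ∃ j ∈ T, (w : ℝ) ≤ j ∧ ENNReal.ofReal ε ≤ ψ j ω} :=
          mul_le_mul_right (measure_mono hbad) _
      _ ≤ ∫⁻ ω, ψ w ω ∂P := mul_measure_exists_ge_le_lintegral hψ hsuper _
          ((to_countable _).image _) ⟨w, ⟨hvw.le, hwt⟩, rfl⟩
      _ ≤ ∫⁻ ω in {ω | r ≤ dist (X w ω) z}, ENNReal.ofReal (p (t - w) (X w ω) z) ∂P := by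
          rw [lintegral_indicator (ℱ.le w _ (measurableSet_ratFarSet hX_meas z r hv hwt.le))]
          exact lintegral_mono_set fun ω hω => hω w hvw.le le_rfl
      _ = _ := setLIntegral_density_far_eq hMarkov hp_meas hX_meas hx z (hv.trans hvw.le) hwt r
  have hzero := eq_zero_of_forall_rat_le_of_tendsto hvt hdual hbound
  rw [ae_iff]
  refine measure_mono_null (fun ω hω => ?_)
    ((mul_eq_zero.1 hzero).resolve_left (ENNReal.ofReal_pos.2 hε).ne')
  push Not at hω
  exact hω

theorem ae_tendsto_density_nhdsLT_zero [IsProbabilityMeasure P]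
    (hMarkov : HasTransitionDensity P ℱ X m p t)
    (hCK : ChapmanKolmogorov m p) (hp_meas : Measurable fun q : ℝ × E × E => p q.1 q.2.1 q.2.2)
    (hp_nonneg : ∀ (v : ℝ) (x' z' : E), 0 < v → 0 ≤ p v x' z') (ht : 0 < t)
    (hX_meas : ∀ s : ℝ, 0 ≤ s → s ≤ t → Measurable[ℱ s] (X s))
    (hX_cont : ∀ ω, ContinuousOn (fun s => X s ω) (Icc 0 t)) (hx : ∀ᵐ ω ∂P, X 0 ω = x) {z : E}
    (hright : ∀ᵐ ω ∂P, ∀ s ∈ Ico (0 : ℝ) t,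
      Tendsto (fun u => p (t - u) (X u ω) z) (𝓝[≥] s) (𝓝 (p (t - s) (X s ω) z)))
    (hdual : ∀ r : ℝ, 0 < r → Tendsto (fun u => ∫⁻ y in {y : E | r ≤ dist y z},
      ENNReal.ofReal (p (t - u) y z) * ENNReal.ofReal (p u x y) ∂m) (𝓝[<] t) (𝓝 0))
    (hXt : P {ω | X t ω = z} = 0) :
    ∀ᵐ ω ∂P, Tendsto (fun s => p (t - s) (X s ω) z) (𝓝[<] t) (𝓝 0) := by
  have hsmall : ∀ᵐ ω ∂P, ∀ (k : ℕ) (v : ℚ) (n : ℕ), 0 ≤ (v : ℝ) → (v : ℝ) < t →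
      (∀ u ∈ Icc (v : ℝ) t, 1 / ((k : ℝ) + 1) ≤ dist (X u ω) z) →
      ∃ w < t, ∀ q : ℚ, w ≤ q → (q : ℝ) < t → p (t - q) (X q ω) z < 1 / ((n : ℝ) + 1) := by
    simp only [ae_all_iff]
    intro k v n hv hvt
    exact ae_exists_forall_rat_density_lt hMarkov hCK hp_meas hX_meas hx
      (hdual (1 / ((k : ℝ) + 1)) (by positivity)) hv hvt (by positivity)
  have hne : ∀ᵐ ω ∂P, X t ω ≠ z := measure_eq_zero_iff_ae_notMem.1 hXt
  filter_upwards [hright, hne, hsmall] with ω hright hne hsmall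
  obtain ⟨k, v, hv, hvt, hfar⟩ := exists_nat_rat_forall_Icc_le_dist ht
    (hX_cont ω t ⟨ht.le, le_rfl⟩) hne
  refine tendsto_nhdsLT_zero_of_forall_rat_lt hvt
    (fun u hu => hright u ⟨hv.trans hu.1, hu.2⟩) (fun u hu => hp_nonneg _ _ _ (sub_pos.2 hu.2))
    fun ε hε => ?_
  obtain ⟨n, hn⟩ := exists_nat_one_div_lt hε
  obtain ⟨w, hwt, hw⟩ := hsmall k v n hv hvt hfar
  exact ⟨w, hwt, fun q hwq hqt => (hw q hwq hqt).trans hn⟩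

end DensityProcess

theorem stmt8_general {Ω : Type*} {mΩ : MeasurableSpace Ω} (P : Measure Ω) [IsProbabilityMeasure P]
    (t : ℝ) (ht : 0 < t) (ℱ : Filtration ℝ mΩ)
    {E : Type*} [MetricSpace E] [MeasurableSpace E] [BorelSpace E]
    (m : Measure E)
    (X : ℝ → Ω → E)
    (hX_meas : ∀ s : ℝ, 0 ≤ s → s ≤ t → Measurable[ℱ s] (X s))
    (hX_cont : ∀ ω, ContinuousOn (fun s => X s ω) (Set.Icc 0 t))
    (x : E) (hx : ∀ᵐ ω ∂P, X 0 ω = x)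
    (p : ℝ → E → E → ℝ)
    (hp_meas : Measurable (fun q : ℝ × E × E => p q.1 q.2.1 q.2.2))
    (hp_nonneg : ∀ (v : ℝ) (x' z' : E), 0 < v → 0 ≤ p v x' z')
    (z : E)
    (hMarkov : ∀ s u : ℝ, 0 ≤ s → s ≤ u → u < t → ∀ g : E → ℝ≥0∞, Measurable g →
      ∀ A : Set Ω, MeasurableSet[ℱ s] A →
        ∫⁻ ω in A, g (X u ω) ∂P
          = ∫⁻ ω in A, ∫⁻ y, g y * ENNReal.ofReal (p (u - s) (X s ω) y) ∂m ∂P)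
    (hCK : ∀ v w : ℝ, 0 < v → 0 < w → ∀ x' z' : E,
      ∫⁻ y, ENNReal.ofReal (p v x' y) * ENNReal.ofReal (p w y z') ∂m
        = ENNReal.ofReal (p (v + w) x' z'))
    (hcadlag : ∀ᵐ ω ∂P,
      (∀ s ∈ Set.Ico (0:ℝ) t,
        Tendsto (fun u => p (t - u) (X u ω) z) (nhdsWithin s (Set.Ici s))
          (nhds (p (t - s) (X s ω) z))) ∧
      (∀ s ∈ Set.Ioo (0:ℝ) t, ∃ l : ℝ,
        Tendsto (fun u => p (t - u) (X u ω) z) (nhdsWithin s (Set.Iio s)) (nhds l)))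
    (hdual : ∀ r : ℝ, 0 < r →
      Tendsto (fun u => ∫⁻ y in {y : E | r ≤ dist y z},
          ENNReal.ofReal (p (t - u) y z) * ENNReal.ofReal (p u x y) ∂m)
        (nhdsWithin t (Set.Iio t)) (nhds 0))
    (hXt : P {ω | X t ω = z} = 0) :
    (∀ᵐ ω ∂P,
      Tendsto (fun s => p (t - s) (X s ω) z) (nhdsWithin t (Set.Iio t)) (nhds 0)) ∧
    (∀ s : ℝ, 0 ≤ s → s ≤ t →
      Integrable (fun ω => if s < t then p (t - s) (X s ω) z else 0) P) ∧
    (∀ s u : ℝ, 0 ≤ s → s ≤ u → u ≤ t →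
      P[(fun ω => if u < t then p (t - u) (X u ω) z else 0)|ℱ s]
        ≤ᵐ[P] fun ω => if s < t then p (t - s) (X s ω) z else 0) := by
  refine ⟨ae_tendsto_density_nhdsLT_zero hMarkov hCK hp_meas hp_nonneg ht hX_meas hX_cont hx
    (hcadlag.mono fun ω h => h.1) hdual hXt, fun s hs _ => ?_, fun s u hs hsu hut => ?_⟩
  · split_ifs with hst
    · exact integrable_density hMarkov hCK hp_meas hp_nonneg hX_meas hx z hs hst
    · exact integrable_zero _ _ _
  · by_cases hu : u < t
    · simp only [if_pos hu, if_pos (hsu.trans_lt hu)]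
      exact (density_ae_eq_condExp hMarkov hCK hp_meas hp_nonneg hX_meas hx z hs hsu hu).symm.le
    simp only [if_neg hu, condExp_const (ℱ.le s)]
    refine ae_of_all _ fun ω => ?_
    split_ifs with hst
    exacts [hp_nonneg _ _ _ (sub_pos.2 hst), le_rfl]

/-- second part of Lemma B.1: under the Markov property with transition
density `p` w.r.t. a σ-finite measure `m`, Chapman–Kolmogorov, a.s. càdlàg paths of
`M_s = p(t-s, X_s, z)` on `[0,t)`, the duality-type condition (iv), and `P(X_t = z) = 0`,
the limit `M_t = lim_{s→t⁻} M_s` exists and equals `0` a.s., and setting `M_t := 0`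
the process `(M_s)_{s ∈ [0,t]}` is an `(ℱ_s)`-supermartingale. -/
theorem stmt8 {Ω : Type*} {mΩ : MeasurableSpace Ω} (P : Measure Ω) [IsProbabilityMeasure P]
    (t : ℝ) (ht : 0 < t) (ℱ : Filtration ℝ mΩ)
    {E : Type*} [MetricSpace E] [MeasurableSpace E] [BorelSpace E]
    (m : Measure E) [SigmaFinite m]
    (X : ℝ → Ω → E)
    (hX_meas : ∀ s : ℝ, 0 ≤ s → s ≤ t → Measurable[ℱ s] (X s))
    (hX_cont : ∀ ω, ContinuousOn (fun s => X s ω) (Set.Icc 0 t))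
    (x : E) (hx : ∀ᵐ ω ∂P, X 0 ω = x)
    (p : ℝ → E → E → ℝ)
    (hp_meas : Measurable (fun q : ℝ × E × E => p q.1 q.2.1 q.2.2))
    (hp_nonneg : ∀ (v : ℝ) (x' z' : E), 0 < v → 0 ≤ p v x' z')
    (z : E) (hz_pos : 0 < p t x z)
    (hMarkov : ∀ s u : ℝ, 0 ≤ s → s ≤ u → u < t → ∀ g : E → ℝ≥0∞, Measurable g →
      ∀ A : Set Ω, MeasurableSet[ℱ s] A →
        ∫⁻ ω in A, g (X u ω) ∂P
          = ∫⁻ ω in A, ∫⁻ y, g y * ENNReal.ofReal (p (u - s) (X s ω) y) ∂m ∂P)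
    (hCK : ∀ v w : ℝ, 0 < v → 0 < w → ∀ x' z' : E,
      ∫⁻ y, ENNReal.ofReal (p v x' y) * ENNReal.ofReal (p w y z') ∂m
        = ENNReal.ofReal (p (v + w) x' z'))
    (hcadlag : ∀ᵐ ω ∂P,
      (∀ s ∈ Set.Ico (0:ℝ) t,
        Tendsto (fun u => p (t - u) (X u ω) z) (nhdsWithin s (Set.Ici s))
          (nhds (p (t - s) (X s ω) z))) ∧
      (∀ s ∈ Set.Ioo (0:ℝ) t, ∃ l : ℝ,
        Tendsto (fun u => p (t - u) (X u ω) z) (nhdsWithin s (Set.Iio s)) (nhds l)))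
    (hdual : ∀ r : ℝ, 0 < r →
      Tendsto (fun u => ∫⁻ y in {y : E | r ≤ dist y z},
          ENNReal.ofReal (p (t - u) y z) * ENNReal.ofReal (p u x y) ∂m)
        (nhdsWithin t (Set.Iio t)) (nhds 0))
    (hXt : P {ω | X t ω = z} = 0) :
    (∀ᵐ ω ∂P,
      Tendsto (fun s => p (t - s) (X s ω) z) (nhdsWithin t (Set.Iio t)) (nhds 0)) ∧
    (∀ s : ℝ, 0 ≤ s → s ≤ t →
      Integrable (fun ω => if s < t then p (t - s) (X s ω) z else 0) P) ∧
    (∀ s u : ℝ, 0 ≤ s → s ≤ u → u ≤ t →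
      P[(fun ω => if u < t then p (t - u) (X u ω) z else 0)|ℱ s]
        ≤ᵐ[P] fun ω => if s < t then p (t - s) (X s ω) z else 0) :=
  stmt8_general P t ht ℱ m X hX_meas hX_cont x hx p hp_meas hp_nonneg z hMarkov hCK hcadlag hdual
    hXt
end

section
/- Let (Ω, 𝒜, P) be a probability space with a filtration (ℱ_s)_{s ∈ [0,T]} for some T > 0, and let M = (M_s)_{s ∈ [0,T]} be a nonnegative (ℱ_s)-martingale under P with continuous sample paths and M_0 = c P-a.s. for a constant c > 0. Define the probability measure Q on 𝒜 by Q(A) = (1/c) ∫_A M_T dP. Then Q({ω : inf_{s ∈ [0,T]} M_s(ω) = 0}) = 0. -/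
/-!
If `M` first drops below `ε` at a time `t` of a finite set `F`, that event lies in `ℱ t`, so the
martingale property turns `∫ M_T` over it into `∫ M_t ≤ ε · P(event)`. Summing over the possible
first times, `∫ M_T ≤ ε` on the event that `M` drops below `ε` somewhere on `F`, and by monotone
convergence the same holds on a countable dense set of times. By path continuity the event
`inf M = 0` is contained in all of these, so it is null for `M_T dP` and hence for `Q`.
-/
open MeasureTheory Filter
open scoped ENNReal

section

variable {Ω : Type*} {mΩ : MeasurableSpace Ω} {P : Measure Ω}

theorem setIntegral_le_mul_measureReal_of_condExp_lt [IsFiniteMeasure P] {m : MeasurableSpace Ω}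
    {X Y : Ω → ℝ} {s : Set Ω} {ε : ℝ} (hm : m ≤ mΩ) (hX : Integrable X P)
    (hXY : P[X|m] =ᵐ[P] Y) (hs : MeasurableSet[m] s) (hYs : ∀ ω ∈ s, Y ω < ε) :
    ∫ ω in s, X ω ∂P ≤ ε * P.real s := by
  calc ∫ ω in s, X ω ∂P = ∫ ω in s, Y ω ∂P :=
        (setIntegral_condExp hm hX hs).symm.trans
          (setIntegral_congr_ae (hm s hs) (hXY.mono fun _ h _ => h))
    _ ≤ ∫ _ in s, ε ∂P :=
        setIntegral_mono_on (integrable_condExp.congr hXY).integrableOn integrableOn_const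
          (hm s hs) fun ω hω => (hYs ω hω).le
    _ = ε * P.real s := by rw [setIntegral_const, smul_eq_mul, mul_comm]

variable {ι : Type*} [LinearOrder ι] {ℱ : Filtration ι mΩ} {M : ι → Ω → ℝ} {T : ι} {ε : ℝ}

theorem setIntegral_biUnion_lt_le_mul_measureReal [IsFiniteMeasure P] (F : Finset ι)
    (hadapted : ∀ t ∈ F, Measurable[ℱ t] (M t)) (hint : Integrable (M T) P)
    (hcond : ∀ t ∈ F, P[M T|ℱ t] =ᵐ[P] M t) :
    ∫ ω in ⋃ t ∈ F, {ω | M t ω < ε}, M T ω ∂P ≤ ε * P.real (⋃ t ∈ F, {ω | M t ω < ε}) := by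
  classical
  induction F using Finset.induction_on_max with
  | empty => simp
  | insert a F hlt ih =>
    simp only [Finset.mem_insert, forall_eq_or_imp] at hadapted hcond
    set A := ⋃ t ∈ F, {ω | M t ω < ε}
    have hA : MeasurableSet[ℱ a] A := Finset.measurableSet_biUnion F fun t ht =>
      ℱ.mono (hlt t ht).le _ (hadapted.2 t ht measurableSet_Iio)
    have hC : MeasurableSet[ℱ a] ({ω | M a ω < ε} \ A) :=
      (hadapted.1 measurableSet_Iio).diff hA
    have hdisj : Disjoint A ({ω | M a ω < ε} \ A) := Set.disjoint_sdiff_right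
    rw [Finset.set_biUnion_insert, Set.union_comm, ← Set.union_sdiff_self,
      setIntegral_union hdisj (ℱ.le a _ hC) hint.integrableOn hint.integrableOn,
      measureReal_union hdisj (ℱ.le a _ hC) (measure_ne_top P _) (measure_ne_top P _), mul_add]
    exact add_le_add (ih hadapted.2 hcond.2)
      (setIntegral_le_mul_measureReal_of_condExp_lt (ℱ.le a) hint hcond.1 hC fun _ hω => hω.1)

theorem withDensity_ofReal_iUnion_lt_le [IsProbabilityMeasure P] (d : ℕ → ι)
    (hadapted : ∀ k, Measurable[ℱ (d k)] (M (d k))) (hint : Integrable (M T) P)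
    (hcond : ∀ k, P[M T|ℱ (d k)] =ᵐ[P] M (d k)) (hnonneg : 0 ≤ M T) (hε : 0 ≤ ε) :
    P.withDensity (fun ω => ENNReal.ofReal (M T ω)) (⋃ k, {ω | M (d k) ω < ε})
      ≤ ENNReal.ofReal ε := by
  classical
  rw [measure_iUnion_eq_iSup_accumulate]
  refine iSup_le fun n => ?_
  have hacc : Set.accumulate (fun k => {ω | M (d k) ω < ε}) n
      = ⋃ t ∈ (Finset.range (n + 1)).image d, {ω | M t ω < ε} := by
    ext ω; simp [Set.accumulate_def]
  have hmeas : MeasurableSet (⋃ t ∈ (Finset.range (n + 1)).image d, {ω | M t ω < ε}) :=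
    Finset.measurableSet_biUnion _ fun t ht => by
      obtain ⟨k, -, rfl⟩ := Finset.mem_image.1 ht
      exact ℱ.le _ _ (hadapted k measurableSet_Iio)
  rw [hacc, withDensity_apply _ hmeas,
    ← ofReal_integral_eq_lintegral_ofReal hint.integrableOn (ae_of_all _ hnonneg)]
  refine ENNReal.ofReal_le_ofReal
    ((setIntegral_biUnion_lt_le_mul_measureReal (ℱ := ℱ) _ ?_ hint ?_).trans ?_)
  · simpa using fun k _ => hadapted k
  · simpa using fun k _ => hcond k
  · exact mul_le_of_le_one_right hε measureReal_le_one

end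

theorem DenseRange.exists_lt_of_ciInf_lt {X ι : Type*} [TopologicalSpace X] [Nonempty X]
    {f : X → ℝ} {u : ι → X} {ε : ℝ} (hu : DenseRange u) (hf : Continuous f) (h : ⨅ x, f x < ε) :
    ∃ k, f (u k) < ε :=
  hu.exists_mem_open (isOpen_Iio.preimage hf) (_root_.exists_lt_of_ciInf_lt h)

theorem stmt11_general {Ω : Type*} {mΩ : MeasurableSpace Ω} (P : Measure Ω) [IsProbabilityMeasure P]
    (T : ℝ) (hT : 0 < T) (ℱ : Filtration ℝ mΩ)
    (M : ℝ → Ω → ℝ) (c : ℝ)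
    (h_adapted : ∀ s ∈ Set.Icc (0:ℝ) T, Measurable[ℱ s] (M s))
    (h_nonneg : ∀ s ∈ Set.Icc (0:ℝ) T, ∀ ω, 0 ≤ M s ω)
    (h_cont : ∀ ω, ContinuousOn (fun s => M s ω) (Set.Icc (0:ℝ) T))
    (h_int : ∀ s ∈ Set.Icc (0:ℝ) T, Integrable (M s) P)
    (h_mart : ∀ s u : ℝ, 0 ≤ s → s ≤ u → u ≤ T → P[M u|ℱ s] =ᵐ[P] M s) :
    (P.withDensity fun ω => ENNReal.ofReal (c⁻¹ * M T ω))
      {ω | (⨅ s : Set.Icc (0:ℝ) T, M s.1 ω) = 0} = 0 := by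
  have hT_mem : T ∈ Set.Icc 0 T := ⟨hT.le, le_rfl⟩
  have : Nonempty (Set.Icc 0 T) := ⟨⟨T, hT_mem⟩⟩
  obtain ⟨u, hu⟩ := TopologicalSpace.exists_dense_seq (Set.Icc 0 T)
  set Z := {ω | (⨅ s : Set.Icc (0:ℝ) T, M s.1 ω) = 0}
  have hZ : ∀ ε > 0, Z ⊆ ⋃ k, {ω | M (u k) ω < ε} := fun ε hε ω hω =>
    Set.mem_iUnion.2 <| hu.exists_lt_of_ciInf_lt (h_cont ω).domRestrict (hω.symm ▸ hε)
  have hνZ : P.withDensity (fun ω => ENNReal.ofReal (M T ω)) Z = 0 := by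
    refine le_antisymm (ENNReal.le_of_forall_pos_le_add fun ε hε _ => ?_) bot_le
    refine (measure_mono (hZ ε hε)).trans ?_
    simpa using withDensity_ofReal_iUnion_lt_le (P := P) (ℱ := ℱ) (fun k => (u k : ℝ))
      (fun k => h_adapted _ (u k).2) (h_int T hT_mem)
      (fun k => h_mart _ _ (u k).2.1 (u k).2.2 le_rfl) (h_nonneg T hT_mem) ε.2
  have hdensity : (fun ω => ENNReal.ofReal (c⁻¹ * M T ω))
      = ENNReal.ofReal c⁻¹ • fun ω => ENNReal.ofReal (M T ω) := by
    ext ω; exact ENNReal.ofReal_mul' (h_nonneg T hT_mem ω)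
  rw [hdensity, withDensity_smul' _ _ ENNReal.ofReal_ne_top, Measure.smul_apply, hνZ, smul_zero]

/-- if `M` is a nonnegative continuous `(ℱ_s)`-martingale on `[0,T]` with
`M_0 = c > 0`, and `Q` is the measure with density `M_T / c` w.r.t. `P`, then
`Q(inf_{s ∈ [0,T]} M_s = 0) = 0`. -/
theorem stmt11 {Ω : Type*} {mΩ : MeasurableSpace Ω} (P : Measure Ω) [IsProbabilityMeasure P]
    (T : ℝ) (hT : 0 < T) (ℱ : Filtration ℝ mΩ)
    (M : ℝ → Ω → ℝ) (c : ℝ) (hc : 0 < c)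
    (h_adapted : ∀ s ∈ Set.Icc (0:ℝ) T, Measurable[ℱ s] (M s))
    (h_nonneg : ∀ s ∈ Set.Icc (0:ℝ) T, ∀ ω, 0 ≤ M s ω)
    (h_cont : ∀ ω, ContinuousOn (fun s => M s ω) (Set.Icc (0:ℝ) T))
    (h_int : ∀ s ∈ Set.Icc (0:ℝ) T, Integrable (M s) P)
    (h_mart : ∀ s u : ℝ, 0 ≤ s → s ≤ u → u ≤ T → P[M u|ℱ s] =ᵐ[P] M s)
    (h0 : ∀ᵐ ω ∂P, M 0 ω = c) :
    (P.withDensity fun ω => ENNReal.ofReal (c⁻¹ * M T ω))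
      {ω | (⨅ s : Set.Icc (0:ℝ) T, M s.1 ω) = 0} = 0 :=
  stmt11_general P T hT ℱ M c h_adapted h_nonneg h_cont h_int h_mart
end
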